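/- arXiv:2003.05800 — 3 statements merged into one kernel-verified Lean document; each statement's English description precedes it below -/
import Mathlib

section
/- For every Bohr almost periodic function f : ℝ → ℂ, the mean value M(f) := lim_{t→∞} (1/t) ∫₀ᵗ f(s) ds exists. -/
/-!
The primitive `F t = ∫ s in 0..t, f s` of a Bohr almost periodic `f` is Lipschitz, since `f` is
bounded, and almost additive: comparing `∫ s in a..a + T, f s` with its translate by an
`ε`-almost period `τ ∈ [-a, -a + l]` gives `‖F (a + T) - F a - F T‖ ≤ ε |T| + 2 C l`.
Cutting `[0, T]` into `⌊T / S⌋` blocks of length `S` then yields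
`‖T⁻¹ F T - S⁻¹ F S‖ ≤ 2 C S / T + ε + 2 C l / S`, so `t⁻¹ F t` is Cauchy as `t → ∞`.
-/

open Filter MeasureTheory

/-- A set `A ⊆ ℝ` is relatively dense if there exists `l > 0` such that every
interval of length `l` meets `A`. -/
def RelativelyDense (A : Set ℝ) : Prop :=
  ∃ l > (0 : ℝ), ∀ x : ℝ, ∃ τ ∈ A, τ ∈ Set.Icc x (x + l)

/-- `f` is Bohr almost periodic: `f` is continuous and, for every `ε > 0`, the set of its
`ε`-almost periods is relatively dense. -/
def BohrAP {E : Type*} [NormedAddCommGroup E] (f : ℝ → E) : Prop :=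
  Continuous f ∧ ∀ ε > (0 : ℝ), RelativelyDense {τ : ℝ | ∀ t : ℝ, ‖f (t + τ) - f t‖ ≤ ε}

open scoped NNReal Topology

section QuasiAdditive

variable {E : Type*} [NormedAddCommGroup E]

theorem norm_sub_nsmul_le_of_norm_add_sub_le {F : ℝ → E} (h0 : F 0 = 0) {S B : ℝ}
    (hB : ∀ a, ‖F (a + S) - F a - F S‖ ≤ B) (n : ℕ) : ‖F (n * S) - n • F S‖ ≤ n * B := by
  induction n with
  | zero => simp [h0]
  | succ n ih =>
    calc ‖F ((n + 1 : ℕ) * S) - (n + 1) • F S‖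
        = ‖(F (n * S + S) - F (n * S) - F S) + (F (n * S) - n • F S)‖ := by
          rw [succ_nsmul]; push_cast; rw [add_mul, one_mul]; abel_nf
      _ ≤ B + n * B := norm_add_le_of_le (hB _) ih
      _ = (n + 1 : ℕ) * B := by push_cast; ring

variable [NormedSpace ℝ E]

theorem norm_inv_smul_sub_inv_smul_le {F : ℝ → E} {C : ℝ≥0} (hF : LipschitzWith C F)
    (h0 : F 0 = 0) {S T B : ℝ} (hS : 0 < S) (hST : S ≤ T)
    (hB : ∀ a, ‖F (a + S) - F a - F S‖ ≤ B) :
    ‖T⁻¹ • F T - S⁻¹ • F S‖ ≤ 2 * C * S / T + B / S := by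
  have hT : 0 < T := hS.trans_le hST
  set n := ⌊T / S⌋₊
  have hn : (n : ℝ) ≤ T / S := Nat.floor_le (by positivity)
  have hTn : T / S - n < 1 := sub_lt_iff_lt_add'.2 (Nat.lt_floor_add_one _)
  have hnS : n * S ≤ T := (le_div_iff₀ hS).1 hn
  have hTnS : T - n * S ≤ S := by
    have := (div_le_iff₀ hS).1 (sub_lt_iff_lt_add'.1 hTn).le
    linarith only [this]
  have hB0 : 0 ≤ B := by simpa [h0] using hB 0
  have h1 : ‖F T - F (n * S)‖ ≤ C * S := (hF.norm_sub_le _ _).trans <| by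
    rw [Real.norm_eq_abs, abs_of_nonneg (sub_nonneg.2 hnS)]; gcongr
  have h2 := norm_sub_nsmul_le_of_norm_add_sub_le h0 hB n
  have h3 : ‖(T / S - n : ℝ) • F S‖ ≤ C * S := by
    rw [norm_smul, Real.norm_eq_abs, abs_of_nonneg (sub_nonneg.2 hn)]
    refine (mul_le_of_le_one_left (norm_nonneg _) hTn.le).trans ?_
    simpa [h0, abs_of_pos hS] using hF.norm_sub_le S 0
  have hsplit : T⁻¹ • F T - S⁻¹ • F S
      = T⁻¹ • ((F T - F (n * S)) + (F (n * S) - n • F S) - (T / S - n : ℝ) • F S) := by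
    have : S⁻¹ = T⁻¹ * (T / S) := by field_simp
    rw [this, ← smul_smul, ← smul_sub, ← Nat.cast_smul_eq_nsmul ℝ]
    congr 1
    module
  calc ‖T⁻¹ • F T - S⁻¹ • F S‖ ≤ T⁻¹ * (C * S + n * B + C * S) := by
        rw [hsplit, norm_smul, Real.norm_eq_abs, abs_of_pos (inv_pos.2 hT)]
        gcongr
        exact norm_sub_le_of_le (norm_add_le_of_le h1 h2) h3
    _ ≤ T⁻¹ * (C * S + T / S * B + C * S) := by gcongr
    _ = 2 * C * S / T + B / S := by field_simp; ring

theorem LipschitzWith.exists_tendsto_inv_smul_of_norm_add_sub_le [CompleteSpace E] {F : ℝ → E}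
    {C : ℝ≥0} (hF : LipschitzWith C F) (h0 : F 0 = 0)
    (hadd : ∀ ε > 0, ∃ K, ∀ a T, ‖F (a + T) - F a - F T‖ ≤ ε * |T| + K) :
    ∃ v, Tendsto (fun t => t⁻¹ • F t) atTop (𝓝 v) := by
  refine cauchySeq_tendsto_of_complete (Metric.cauchySeq_iff.2 fun δ hδ => ?_)
  obtain ⟨K, hK⟩ := hadd (δ / 8) (by positivity)
  have hdecay : ∀ c : ℝ, Tendsto (fun x : ℝ => c / x) atTop (𝓝 0) := fun c =>
    tendsto_const_nhds.div_atTop tendsto_id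
  obtain ⟨S, hS, hKS⟩ : ∃ S, 0 < S ∧ K / S < δ / 8 :=
    ((eventually_gt_atTop 0).and ((hdecay K).eventually (gt_mem_nhds (by positivity)))).exists
  obtain ⟨T₀, hT₀⟩ := eventually_atTop.1 ((eventually_ge_atTop S).and
    ((hdecay (2 * C * S)).eventually (gt_mem_nhds (by positivity : 0 < δ / 8))))
  have near : ∀ T ≥ T₀, dist (T⁻¹ • F T) (S⁻¹ • F S) < 3 * δ / 8 := fun T hT => by
    obtain ⟨hST, hCT⟩ := hT₀ T hT
    rw [dist_eq_norm]
    calc _ ≤ 2 * C * S / T + (δ / 8 * |S| + K) / S :=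
          norm_inv_smul_sub_inv_smul_le hF h0 hS hST fun a => hK a S
      _ = 2 * C * S / T + δ / 8 + K / S := by rw [abs_of_pos hS]; field_simp; ring
      _ < δ / 8 + δ / 8 + δ / 8 := by gcongr
      _ = 3 * δ / 8 := by ring
  exact ⟨T₀, fun m hm n hn => (dist_triangle_right _ _ (S⁻¹ • F S)).trans_lt <| by
    linarith only [near m hm, near n hn, hδ]⟩

end QuasiAdditive

section Primitive

variable {E : Type*} [NormedAddCommGroup E] [NormedSpace ℝ E]

theorem lipschitzWith_intervalIntegral_of_norm_le {f : ℝ → E} (hf : Continuous f) {C : ℝ≥0}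
    (hC : ∀ t, ‖f t‖ ≤ C) (a : ℝ) : LipschitzWith C fun t => ∫ s in a..t, f s :=
  LipschitzWith.of_dist_le_mul fun s t => by
    rw [dist_eq_norm, intervalIntegral.integral_interval_sub_left (hf.intervalIntegrable _ _)
      (hf.intervalIntegrable _ _), Real.dist_eq]
    exact intervalIntegral.norm_integral_le_of_norm_le_const fun x _ => hC x

theorem norm_integral_sub_integral_shift_le {f : ℝ → E} (hf : Continuous f) {τ ε : ℝ}
    (hτ : ∀ t, ‖f (t + τ) - f t‖ ≤ ε) (a T : ℝ) :
    ‖(∫ s in a..a + T, f s) - ∫ s in a + τ..a + τ + T, f s‖ ≤ ε * |T| := by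
  have hshift : ∫ s in a + τ..a + τ + T, f s = ∫ s in a..a + T, f (s + τ) := by
    rw [intervalIntegral.integral_comp_add_right]; ring_nf
  have hfτ : Continuous fun s => f (s + τ) := hf.comp (continuous_add_const τ)
  rw [hshift, ← intervalIntegral.integral_sub (hf.intervalIntegrable _ _)
    (hfτ.intervalIntegrable _ _)]
  calc _ ≤ ε * |a + T - a| := intervalIntegral.norm_integral_le_of_norm_le_const fun t _ => by
        rw [norm_sub_rev]; exact hτ t
    _ = ε * |T| := by rw [add_sub_cancel_left]

end Primitive

namespace BohrAP

variable {E : Type*} [NormedAddCommGroup E]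

theorem exists_norm_le {f : ℝ → E} (hf : BohrAP f) : ∃ C : ℝ≥0, ∀ t, ‖f t‖ ≤ C := by
  obtain ⟨l, hl, hA⟩ := hf.2 1 one_pos
  obtain ⟨x₀, -, hx₀⟩ := isCompact_Icc.exists_isMaxOn (Set.nonempty_Icc.2 hl.le)
    hf.1.norm.continuousOn
  refine ⟨‖f x₀‖₊ + 1, fun t => ?_⟩
  obtain ⟨τ, hτ, hτI⟩ := hA (-t)
  have hmem : t + τ ∈ Set.Icc 0 l := ⟨by linarith [hτI.1], by linarith [hτI.2]⟩
  calc ‖f t‖ ≤ ‖f (t + τ)‖ + ‖f (t + τ) - f t‖ := norm_le_norm_add_norm_sub _ _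
    _ ≤ ‖f x₀‖ + 1 := add_le_add (hx₀ hmem) (hτ t)
    _ = _ := by push_cast; rfl

variable [NormedSpace ℝ E]

theorem exists_norm_primitive_add_sub_le {f : ℝ → E} (hf : BohrAP f) {ε : ℝ} (hε : 0 < ε) :
    ∃ K, ∀ a T, ‖(∫ s in 0..a + T, f s) - (∫ s in 0..a, f s) - ∫ s in 0..T, f s‖
      ≤ ε * |T| + K := by
  obtain ⟨C, hC⟩ := hf.exists_norm_le
  set F := fun t => ∫ s in 0..t, f s
  have hF := lipschitzWith_intervalIntegral_of_norm_le hf.1 hC 0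
  have hsub : ∀ u v, F v - F u = ∫ s in u..v, f s := fun u v =>
    intervalIntegral.integral_interval_sub_left (hf.1.intervalIntegrable _ _)
      (hf.1.intervalIntegrable _ _)
  obtain ⟨l, -, hA⟩ := hf.2 ε hε
  refine ⟨2 * C * l, fun a T => ?_⟩
  obtain ⟨τ, hτ, hτI⟩ := hA (-a)
  have hb : ‖a + τ‖ ≤ l := abs_le.2 ⟨by linarith [hτI.1, hτI.2], by linarith [hτI.2]⟩
  have hshift := norm_integral_sub_integral_shift_le hf.1 hτ a T
  rw [← hsub, ← hsub] at hshift
  have h2 : ‖F (a + τ + T) - F T‖ ≤ C * l :=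
    (hF.norm_sub_le _ _).trans (by rw [add_sub_cancel_right]; gcongr)
  have h3 : ‖F (a + τ) - F 0‖ ≤ C * l := (hF.norm_sub_le _ _).trans (by rw [sub_zero]; gcongr)
  calc ‖F (a + T) - F a - F T‖
      = ‖(F (a + T) - F a - (F (a + τ + T) - F (a + τ))) +
          (F (a + τ + T) - F T - (F (a + τ) - F 0))‖ := by
        rw [show F 0 = 0 from intervalIntegral.integral_same]; congr 1; abel
    _ ≤ ε * |T| + (C * l + C * l) := norm_add_le_of_le hshift (norm_sub_le_of_le h2 h3)
    _ = ε * |T| + 2 * C * l := by ring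

theorem exists_tendsto_inv_smul_integral [CompleteSpace E] {f : ℝ → E} (hf : BohrAP f) :
    ∃ v, Tendsto (fun t => t⁻¹ • ∫ s in 0..t, f s) atTop (𝓝 v) := by
  obtain ⟨C, hC⟩ := hf.exists_norm_le
  exact (lipschitzWith_intervalIntegral_of_norm_le hf.1 hC 0)
    |>.exists_tendsto_inv_smul_of_norm_add_sub_le intervalIntegral.integral_same
      fun _ hε => hf.exists_norm_primitive_add_sub_le hε

end BohrAP

/-- The mean value `M(f) = lim_{t→∞} (1/t) ∫₀ᵗ f(s) ds` of a Bohr almost periodic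
function `f : ℝ → ℂ` exists. -/
theorem mean_value_of_bohrAP (f : ℝ → ℂ) (hf : BohrAP f) :
    ∃ M : ℂ, Tendsto (fun t : ℝ => (t : ℂ)⁻¹ • ∫ s in (0:ℝ)..t, f s) atTop (nhds M) := by
  obtain ⟨M, hM⟩ := hf.exists_tendsto_inv_smul_integral
  refine ⟨M, hM.congr fun t => ?_⟩
  rw [Complex.real_smul, Complex.ofReal_inv, smul_eq_mul]
end

section
/- Let S(t) = exp(At) satisfy ‖S(t)‖_op ≤ c_S e^{−m_S t} for t ≥ 0, and let b : ℝ × ℝ^d → ℝ^d be continuous, Lipschitz in the second variable with constant c_b, with linear growth ‖b(t,x)‖ ≤ m_b(1+‖x‖), and such that t ↦ b(t,x) is Bohr almost periodic uniformly with respect to x in compact sets. If c_S c_b/m_S < 1, then the unique bounded continuous solution x of x(t) = ∫_{−∞}^t S(t−s) b(s,x(s)) ds is Bohr almost periodic. -/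
/-
Let `τ` be a `δ`-almost period of `b`, uniformly on the ball of radius `sup ‖x‖`, and
`M = sup_t ‖x (t + τ) - x t‖`. Translating the integral equation by `τ` writes `x (t + τ) - x t` as
`∫_{-∞}^t S(t - s) (b (s + τ, x (s + τ)) - b (s, x s)) ds`, whose integrand is at most
`c_S e^{-m_S (t - s)} (c_b M + δ)`. Hence `M ≤ (c_S c_b / m_S) M + c_S δ / m_S`, and since
`c_S c_b / m_S < 1` this gives `M ≤ ε` once `δ` is small, so `τ` is an `ε`-almost period of `x`.
-/

open Filter MeasureTheory

/-- `b(t,x)` is Bohr almost periodic in `t` uniformly with respect to `x` in compact sets. -/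
def UnifBohrAP {E F : Type*} [NormedAddCommGroup E] [NormedAddCommGroup F]
    (b : ℝ → E → F) : Prop :=
  ∀ K : Set E, IsCompact K → ∀ ε > (0 : ℝ), RelativelyDense
    {τ : ℝ | ∀ t : ℝ, ∀ x ∈ K, ‖b (t + τ) x - b t x‖ ≤ ε}

lemma le_of_forall_le_mul_add_one_sub_mul {ι : Type*} [Nonempty ι] {g : ι → ℝ}
    (hg : BddAbove (Set.range g)) {q c : ℝ} (hq : q < 1)
    (h : ∀ M, (∀ i, g i ≤ M) → ∀ i, g i ≤ q * M + (1 - q) * c) (i : ι) : g i ≤ c := by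
  have hle : ∀ j, g j ≤ ⨆ j, g j := le_ciSup hg
  have hsup : ⨆ j, g j ≤ q * (⨆ j, g j) + (1 - q) * c := ciSup_le (h _ hle)
  nlinarith [hle i]

lemma setIntegral_Iic_comp_add_right {E : Type*} [NormedAddCommGroup E] [NormedSpace ℝ E]
    (f : ℝ → E) (t τ : ℝ) :
    ∫ s in Set.Iic t, f (s + τ) = ∫ s in Set.Iic (t + τ), f s := by
  have hemb : MeasurableEmbedding (fun s : ℝ => s + τ) :=
    (Homeomorph.addRight τ).isClosedEmbedding.measurableEmbedding
  have h := (measurePreserving_add_right volume τ).setIntegral_preimage_emb hemb f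
    (Set.Iic (t + τ))
  rwa [show (fun s : ℝ => s + τ) ⁻¹' Set.Iic (t + τ) = Set.Iic t by ext s; simp] at h

section ExponentiallyStableKernel

variable {E F : Type*} [NormedAddCommGroup E] [NormedSpace ℝ E]
  [NormedAddCommGroup F] [NormedSpace ℝ F] {S : ℝ → E →L[ℝ] F} {cS mS : ℝ}

lemma norm_apply_sub_le_of_exp_decay
    (hS : ∀ t : ℝ, 0 ≤ t → ‖S t‖ ≤ cS * Real.exp (-mS * t)) {s t B : ℝ} {v : E}
    (hst : s ≤ t) (hv : ‖v‖ ≤ B) :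
    ‖S (t - s) v‖ ≤ cS * B * Real.exp (-mS * t) * Real.exp (mS * s) := by
  have hSts := hS (t - s) (by linarith)
  calc ‖S (t - s) v‖ ≤ ‖S (t - s)‖ * ‖v‖ := (S (t - s)).le_opNorm v
    _ ≤ cS * Real.exp (-mS * (t - s)) * B :=
      mul_le_mul hSts hv (norm_nonneg _) ((norm_nonneg _).trans hSts)
    _ = cS * B * Real.exp (-mS * t) * Real.exp (mS * s) := by
      rw [mul_assoc (cS * B), ← Real.exp_add]; ring_nf

lemma integrableOn_Iic_apply_sub_of_exp_decay (hSc : Continuous S)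
    (hS : ∀ t : ℝ, 0 ≤ t → ‖S t‖ ≤ cS * Real.exp (-mS * t)) (hmS : 0 < mS)
    {u : ℝ → E} (hu : Continuous u) {B : ℝ} (hB : ∀ s, ‖u s‖ ≤ B) (t : ℝ) :
    IntegrableOn (fun s => S (t - s) (u s)) (Set.Iic t) := by
  refine Integrable.mono' ((integrableOn_exp_mul_Iic hmS t).const_mul
    (cS * B * Real.exp (-mS * t))) ?_ ?_
  · exact ((hSc.comp (continuous_const.sub continuous_id)).clm_apply hu).aestronglyMeasurable
  · rw [ae_restrict_iff' measurableSet_Iic]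
    exact ae_of_all _ fun s hs => norm_apply_sub_le_of_exp_decay hS hs (hB s)

lemma norm_setIntegral_Iic_apply_sub_le_of_exp_decay
    (hS : ∀ t : ℝ, 0 ≤ t → ‖S t‖ ≤ cS * Real.exp (-mS * t)) (hmS : 0 < mS)
    {u : ℝ → E} {B t : ℝ} (hB : ∀ s ≤ t, ‖u s‖ ≤ B) :
    ‖∫ s in Set.Iic t, S (t - s) (u s)‖ ≤ cS * B / mS := by
  have hbound := norm_integral_le_of_norm_le
    ((integrableOn_exp_mul_Iic hmS t).const_mul (cS * B * Real.exp (-mS * t)))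
    ((ae_restrict_iff' measurableSet_Iic).2 <|
      ae_of_all _ fun s hs => norm_apply_sub_le_of_exp_decay hS hs (hB s hs))
  rw [integral_const_mul, integral_exp_mul_Iic hmS, mul_div_assoc', mul_assoc,
    ← Real.exp_add] at hbound
  simpa using hbound

lemma norm_shift_sub_le_of_eq_setIntegral_Iic (hSc : Continuous S)
    (hS : ∀ t : ℝ, 0 ≤ t → ‖S t‖ ≤ cS * Real.exp (-mS * t)) (hmS : 0 < mS)
    {f : ℝ → E} (hf : Continuous f) {B : ℝ} (hfB : ∀ s, ‖f s‖ ≤ B)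
    {y : ℝ → F} (hy : ∀ t, y t = ∫ s in Set.Iic t, S (t - s) (f s))
    {τ D : ℝ} (hD : ∀ s, ‖f (s + τ) - f s‖ ≤ D) (t : ℝ) :
    ‖y (t + τ) - y t‖ ≤ cS * D / mS := by
  have hshift : y (t + τ) = ∫ s in Set.Iic t, S (t - s) (f (s + τ)) := by
    rw [hy, ← setIntegral_Iic_comp_add_right (fun s => S (t + τ - s) (f s))]
    simp only [add_sub_add_right_eq_sub]
  have hint_shift : IntegrableOn (fun s => S (t - s) (f (s + τ))) (Set.Iic t) :=
    integrableOn_Iic_apply_sub_of_exp_decay hSc hS hmS (hf.comp (continuous_add_const τ))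
      (fun s => hfB (s + τ)) t
  have hint : IntegrableOn (fun s => S (t - s) (f s)) (Set.Iic t) :=
    integrableOn_Iic_apply_sub_of_exp_decay hSc hS hmS hf hfB t
  have hdiff : y (t + τ) - y t = ∫ s in Set.Iic t, S (t - s) (f (s + τ) - f s) := by
    simp only [map_sub]
    rw [hshift, hy t, ← integral_sub hint_shift hint]
  rw [hdiff]
  exact norm_setIntegral_Iic_apply_sub_le_of_exp_decay hS hmS fun s _ => hD s

end ExponentiallyStableKernel

lemma norm_shift_comp_sub_le {E F : Type*} [NormedAddCommGroup E] [NormedAddCommGroup F]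
    {b : ℝ → E → F} {cb : ℝ} (hcb : 0 ≤ cb)
    (hlip : ∀ (t : ℝ) (x y : E), ‖b t x - b t y‖ ≤ cb * ‖x - y‖)
    {x : ℝ → E} {s τ M δ : ℝ} (hM : ‖x (s + τ) - x s‖ ≤ M)
    (hδ : ‖b (s + τ) (x s) - b s (x s)‖ ≤ δ) :
    ‖b (s + τ) (x (s + τ)) - b s (x s)‖ ≤ cb * M + δ :=
  calc ‖b (s + τ) (x (s + τ)) - b s (x s)‖
      ≤ ‖b (s + τ) (x (s + τ)) - b (s + τ) (x s)‖ + ‖b (s + τ) (x s) - b s (x s)‖ :=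
        norm_sub_le_norm_sub_add_norm_sub _ _ _
    _ ≤ cb * M + δ :=
        add_le_add ((hlip _ _ _).trans (mul_le_mul_of_nonneg_left hM hcb)) hδ

theorem almost_periodic_solution_general {d : ℕ}
    (A : EuclideanSpace ℝ (Fin d) →L[ℝ] EuclideanSpace ℝ (Fin d))
    (cS mS cb mb : ℝ) (hcS : 0 < cS) (hmS : 0 < mS) (hcb : 0 < cb)
    (hS : ∀ t : ℝ, 0 ≤ t → ‖NormedSpace.exp (t • A)‖ ≤ cS * Real.exp (-mS * t))
    (b : ℝ → EuclideanSpace ℝ (Fin d) → EuclideanSpace ℝ (Fin d))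
    (hbcont : Continuous (Function.uncurry b))
    (hlip : ∀ (t : ℝ) (x y : EuclideanSpace ℝ (Fin d)), ‖b t x - b t y‖ ≤ cb * ‖x - y‖)
    (hgrowth : ∀ (t : ℝ) (x : EuclideanSpace ℝ (Fin d)), ‖b t x‖ ≤ mb * (1 + ‖x‖))
    (hbap : UnifBohrAP b)
    (hratio : cS * cb / mS < 1)
    (x : ℝ → EuclideanSpace ℝ (Fin d))
    (hxc : Continuous x) (hxb : ∃ C, ∀ t, ‖x t‖ ≤ C)
    (hsol : ∀ t : ℝ, x t = ∫ s in Set.Iic t, (NormedSpace.exp ((t - s) • A)) (b s (x s))) :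
    BohrAP x := by
  obtain ⟨C, hC⟩ := hxb
  have hmb : 0 ≤ mb := by simpa using (norm_nonneg _).trans (hgrowth 0 0)
  have hbx : ∀ s, ‖b s (x s)‖ ≤ mb * (1 + C) := fun s =>
    (hgrowth s (x s)).trans (by gcongr; exact hC s)
  refine ⟨hxc, fun ε hε => ?_⟩
  set δ := (1 - cS * cb / mS) * ε * mS / cS with hδ
  obtain ⟨l, hl, hdense⟩ := hbap (Metric.closedBall 0 C) (isCompact_closedBall _ _) δ
    (div_pos (mul_pos (mul_pos (by linarith) hε) hmS) hcS)
  refine ⟨l, hl, fun r => ?_⟩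
  obtain ⟨τ, hτ, hτr⟩ := hdense r
  have hbdd : BddAbove (Set.range fun s => ‖x (s + τ) - x s‖) :=
    ⟨C + C, by rintro _ ⟨s, rfl⟩; exact (norm_sub_le _ _).trans (add_le_add (hC _) (hC _))⟩
  refine ⟨τ, le_of_forall_le_mul_add_one_sub_mul hbdd hratio fun M hM s => ?_, hτr⟩
  calc ‖x (s + τ) - x s‖ ≤ cS * (cb * M + δ) / mS :=
        norm_shift_sub_le_of_eq_setIntegral_Iic (differentiable_exp_smul_const ℝ A).continuous
          hS hmS (hbcont.comp (continuous_id.prodMk hxc)) hbx hsol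
          (fun s => norm_shift_comp_sub_le hcb.le hlip (hM s)
            (hτ s (x s) (mem_closedBall_zero_iff.2 (hC s)))) s
    _ = cS * cb / mS * M + (1 - cS * cb / mS) * ε := by
        rw [hδ]; field_simp

/-- The unique bounded continuous solution of `x(t) = ∫_{-∞}^t e^{(t-s)A} b(s,x(s)) ds`, with
`b` almost periodic uniformly on compacta and `c_S c_b / m_S < 1`, is Bohr almost periodic. -/
theorem almost_periodic_solution {d : ℕ}
    (A : EuclideanSpace ℝ (Fin d) →L[ℝ] EuclideanSpace ℝ (Fin d))
    (cS mS cb mb : ℝ) (hcS : 0 < cS) (hmS : 0 < mS) (hcb : 0 < cb) (hmb : 0 < mb)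
    (hS : ∀ t : ℝ, 0 ≤ t → ‖NormedSpace.exp (t • A)‖ ≤ cS * Real.exp (-mS * t))
    (b : ℝ → EuclideanSpace ℝ (Fin d) → EuclideanSpace ℝ (Fin d))
    (hbcont : Continuous (Function.uncurry b))
    (hlip : ∀ (t : ℝ) (x y : EuclideanSpace ℝ (Fin d)), ‖b t x - b t y‖ ≤ cb * ‖x - y‖)
    (hgrowth : ∀ (t : ℝ) (x : EuclideanSpace ℝ (Fin d)), ‖b t x‖ ≤ mb * (1 + ‖x‖))
    (hbap : UnifBohrAP b)
    (hratio : cS * cb / mS < 1)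
    (x : ℝ → EuclideanSpace ℝ (Fin d))
    (hxc : Continuous x) (hxb : ∃ C, ∀ t, ‖x t‖ ≤ C)
    (hsol : ∀ t : ℝ, x t = ∫ s in Set.Iic t, (NormedSpace.exp ((t - s) • A)) (b s (x s))) :
    BohrAP x :=
  almost_periodic_solution_general A cS mS cb mb hcS hmS hcb hS b hbcont hlip hgrowth hbap hratio x
    hxc hxb hsol
end

section
/- Let S(t) = exp(At) with ‖S(t)‖_op ≤ c_S e^{−m_S t} for t ≥ 0, and let b : ℝ × ℝ^d → ℝ^d be continuous, c_b-Lipschitz in x, with ‖b(t,x)‖ ≤ m_b(1+‖x‖), and τ-periodic in t for some τ > 0 (uniformly in x). If c_S c_b/m_S < 1, then the unique bounded continuous solution x of x(t) = ∫_{−∞}^t S(t−s) b(s,x(s)) ds is τ-periodic. -/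
open Filter MeasureTheory

/-! The shift `t ↦ x (t + τ)` of a solution is again a solution, because `b` is `τ`-periodic and
Lebesgue measure is translation invariant. Two bounded continuous solutions `x, y` coincide:
writing `B = sup_t ‖y t - x t‖`, the Lipschitz bound on `b` and the exponential decay of the
semigroup give `‖y t - x t‖ ≤ ∫_{-∞}^t c_S e^{-m_S (t-s)} c_b B ds = (c_S c_b / m_S) B`, so
`B ≤ (c_S c_b / m_S) B` forces `B = 0`. -/

open Set Real

lemma exp_neg_mul_sub (m t s : ℝ) : exp (-m * (t - s)) = exp (-m * t) * exp (m * s) := by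
  rw [← Real.exp_add]; ring_nf

section

variable {E : Type*} [NormedAddCommGroup E]

lemma integrableOn_Iic_of_norm_le_exp {f : ℝ → E} {m M t : ℝ} (hm : 0 < m)
    (hf : AEStronglyMeasurable f (volume.restrict (Iic t)))
    (hbound : ∀ s ≤ t, ‖f s‖ ≤ M * exp (-m * (t - s))) :
    IntegrableOn f (Iic t) := by
  refine Integrable.mono' ((integrableOn_exp_mul_Iic hm t).const_mul (M * exp (-m * t))) hf ?_
  refine (ae_restrict_iff' measurableSet_Iic).mpr (ae_of_all _ fun s hs => ?_)
  rw [mul_assoc, ← exp_neg_mul_sub]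
  exact hbound s hs

lemma eq_zero_of_norm_le_mul_iSup {ι : Type*} [Nonempty ι] {u : ι → E} {K : ℝ}
    (hu : BddAbove (range fun i => ‖u i‖)) (hK : K < 1)
    (h : ∀ i, ‖u i‖ ≤ K * ⨆ j, ‖u j‖) : u = 0 := by
  set B := ⨆ j, ‖u j‖
  have hB : B ≤ K * B := ciSup_le h
  have hB0 : 0 ≤ B := (norm_nonneg _).trans (le_ciSup hu (Classical.arbitrary ι))
  have hB_zero : B ≤ 0 := by nlinarith
  funext i
  exact norm_le_zero_iff.mp ((le_ciSup hu i).trans hB_zero)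

variable [NormedSpace ℝ E]

lemma norm_setIntegral_Iic_le_of_norm_le_exp {f : ℝ → E} {m M t : ℝ} (hm : 0 < m)
    (hbound : ∀ s ≤ t, ‖f s‖ ≤ M * exp (-m * (t - s))) :
    ‖∫ s in Iic t, f s‖ ≤ M / m := by
  have hdom : ∀ s, M * exp (-m * (t - s)) = M * exp (-m * t) * exp (m * s) := fun s => by
    rw [mul_assoc, exp_neg_mul_sub]
  calc ‖∫ s in Iic t, f s‖ ≤ ∫ s in Iic t, M * exp (-m * (t - s)) := by
        refine norm_integral_le_of_norm_le ?_ ?_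
        · simp_rw [hdom]
          exact (integrableOn_exp_mul_Iic hm t).const_mul _
        · exact (ae_restrict_iff' measurableSet_Iic).mpr (ae_of_all _ hbound)
    _ = M / m := by
        simp_rw [hdom]
        rw [integral_const_mul, integral_exp_mul_Iic hm, mul_div_assoc', mul_assoc,
          ← Real.exp_add, neg_mul, neg_add_cancel, Real.exp_zero, mul_one]

lemma setIntegral_Iic_add_right (f : ℝ → E) (t τ : ℝ) :
    ∫ s in Iic (t + τ), f s = ∫ s in Iic t, f (s + τ) := by
  rw [← (measurePreserving_add_right volume τ).setIntegral_preimage_emb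
    (measurableEmbedding_addRight τ)]
  simp only [preimage_add_const_Iic, add_sub_cancel_right]

def IsMildSolution (S : ℝ → E →L[ℝ] E) (b : ℝ → E → E) (x : ℝ → E) : Prop :=
  ∀ t, x t = ∫ s in Iic t, S (t - s) (b s (x s))

variable {S : ℝ → E →L[ℝ] E} {cS mS : ℝ}

lemma norm_apply_le_exp (hS : ∀ t, 0 ≤ t → ‖S t‖ ≤ cS * exp (-mS * t)) {g : ℝ → E} {M t : ℝ}
    (hg : ∀ s, ‖g s‖ ≤ M) : ∀ s ≤ t, ‖S (t - s) (g s)‖ ≤ cS * M * exp (-mS * (t - s)) := by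
  intro s hs
  have hS' := hS (t - s) (sub_nonneg.mpr hs)
  calc ‖S (t - s) (g s)‖ ≤ ‖S (t - s)‖ * ‖g s‖ := (S (t - s)).le_opNorm _
    _ ≤ cS * exp (-mS * (t - s)) * M :=
        mul_le_mul hS' (hg s) (norm_nonneg _) ((norm_nonneg _).trans hS')
    _ = cS * M * exp (-mS * (t - s)) := by ring

lemma integrableOn_Iic_apply_of_bounded (hScont : Continuous S)
    (hS : ∀ t, 0 ≤ t → ‖S t‖ ≤ cS * exp (-mS * t)) (hmS : 0 < mS) {g : ℝ → E} {M : ℝ}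
    (hgc : Continuous g) (hg : ∀ s, ‖g s‖ ≤ M) (t : ℝ) :
    IntegrableOn (fun s => S (t - s) (g s)) (Iic t) :=
  integrableOn_Iic_of_norm_le_exp hmS
    ((hScont.comp (continuous_const.sub continuous_id)).clm_apply hgc).aestronglyMeasurable
    (norm_apply_le_exp hS hg)

lemma norm_setIntegral_Iic_apply_le (hS : ∀ t, 0 ≤ t → ‖S t‖ ≤ cS * exp (-mS * t))
    (hmS : 0 < mS) {g : ℝ → E} {M : ℝ} (hg : ∀ s, ‖g s‖ ≤ M) (t : ℝ) :
    ‖∫ s in Iic t, S (t - s) (g s)‖ ≤ cS * M / mS :=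
  norm_setIntegral_Iic_le_of_norm_le_exp hmS (norm_apply_le_exp hS hg)

lemma IsMildSolution.comp_add_right {b : ℝ → E → E} {x : ℝ → E} {τ : ℝ}
    (hper : ∀ t y, b (t + τ) y = b t y) (hx : IsMildSolution S b x) :
    IsMildSolution S b (fun t => x (t + τ)) := by
  intro t
  show x (t + τ) = _
  rw [hx (t + τ), setIntegral_Iic_add_right]
  simp only [hper, add_sub_add_right_eq_sub]

theorem IsMildSolution.eq_of_bounded (hScont : Continuous S)
    (hS : ∀ t, 0 ≤ t → ‖S t‖ ≤ cS * exp (-mS * t)) (hmS : 0 < mS)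
    {b : ℝ → E → E} {cb mb : ℝ} (hbcont : Continuous (Function.uncurry b))
    (hcb : 0 ≤ cb) (hlip : ∀ t y z, ‖b t y - b t z‖ ≤ cb * ‖y - z‖)
    (hmb : 0 ≤ mb) (hgrowth : ∀ t y, ‖b t y‖ ≤ mb * (1 + ‖y‖)) (hratio : cS * cb / mS < 1)
    {x y : ℝ → E} (hx : IsMildSolution S b x) (hy : IsMildSolution S b y)
    (hxc : Continuous x) (hyc : Continuous y) {Cx Cy : ℝ}
    (hxb : ∀ t, ‖x t‖ ≤ Cx) (hyb : ∀ t, ‖y t‖ ≤ Cy) : x = y := by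
  have hint : ∀ {z : ℝ → E} {C : ℝ}, Continuous z → (∀ t, ‖z t‖ ≤ C) →
      ∀ t, IntegrableOn (fun s => S (t - s) (b s (z s))) (Iic t) := fun hz hzb =>
    integrableOn_Iic_apply_of_bounded hScont hS hmS (hbcont.comp (continuous_id.prodMk hz)) fun s =>
      (hgrowth s _).trans (mul_le_mul_of_nonneg_left (add_le_add_right (hzb s) 1) hmb)
  have hbdd : BddAbove (range fun t => ‖y t - x t‖) :=
    ⟨Cy + Cx, by rintro _ ⟨t, rfl⟩; exact (norm_sub_le _ _).trans (add_le_add (hyb t) (hxb t))⟩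
  have hdiff : ∀ t, y t - x t = ∫ s in Iic t, S (t - s) (b s (y s) - b s (x s)) := fun t => by
    simp only [map_sub]
    rw [integral_sub (hint hyc hyb t) (hint hxc hxb t), ← hx t, ← hy t]
  have hcontract : ∀ t, ‖y t - x t‖ ≤ cS * cb / mS * ⨆ s, ‖y s - x s‖ := fun t => by
    rw [hdiff, div_mul_eq_mul_div, mul_assoc]
    exact norm_setIntegral_Iic_apply_le hS hmS (fun s => (hlip s _ _).trans
      (mul_le_mul_of_nonneg_left (le_ciSup hbdd s) hcb)) t
  have hzero := eq_zero_of_norm_le_mul_iSup hbdd hratio hcontract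
  funext t
  exact (sub_eq_zero.mp (congrFun hzero t)).symm

end

theorem periodic_solution_general {d : ℕ}
    (A : EuclideanSpace ℝ (Fin d) →L[ℝ] EuclideanSpace ℝ (Fin d))
    (cS mS cb mb : ℝ) (hmS : 0 < mS) (hcb : 0 < cb) (hmb : 0 < mb)
    (hS : ∀ t : ℝ, 0 ≤ t → ‖NormedSpace.exp (t • A)‖ ≤ cS * Real.exp (-mS * t))
    (b : ℝ → EuclideanSpace ℝ (Fin d) → EuclideanSpace ℝ (Fin d))
    (hbcont : Continuous (Function.uncurry b))
    (hlip : ∀ (t : ℝ) (x y : EuclideanSpace ℝ (Fin d)), ‖b t x - b t y‖ ≤ cb * ‖x - y‖)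
    (hgrowth : ∀ (t : ℝ) (x : EuclideanSpace ℝ (Fin d)), ‖b t x‖ ≤ mb * (1 + ‖x‖))
    (τ : ℝ)
    (hper : ∀ (t : ℝ) (x : EuclideanSpace ℝ (Fin d)), b (t + τ) x = b t x)
    (hratio : cS * cb / mS < 1)
    (x : ℝ → EuclideanSpace ℝ (Fin d))
    (hxc : Continuous x) (hxb : ∃ C, ∀ t, ‖x t‖ ≤ C)
    (hsol : ∀ t : ℝ, x t = ∫ s in Set.Iic t, (NormedSpace.exp ((t - s) • A)) (b s (x s))) :
    ∀ t : ℝ, x (t + τ) = x t := by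
  obtain ⟨C, hC⟩ := hxb
  have hSc : Continuous fun t : ℝ => NormedSpace.exp (t • A) :=
    (continuous_iff_continuousAt.2 fun u => (NormedSpace.exp_analytic (𝕂 := ℝ) u).continuousAt).comp
      (continuous_id.smul continuous_const)
  have hx : IsMildSolution (fun t => NormedSpace.exp (t • A)) b x := hsol
  have hshift := hx.comp_add_right hper
  exact congrFun (hshift.eq_of_bounded hSc hS hmS hbcont hcb.le hlip hmb.le hgrowth hratio hx
    (hxc.comp (continuous_add_const τ)) hxc (fun t => hC (t + τ)) hC)

/-- The unique bounded continuous solution of `x(t) = ∫_{-∞}^t e^{(t-s)A} b(s,x(s)) ds`, with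
`b` `τ`-periodic in `t` and `c_S c_b / m_S < 1`, is `τ`-periodic. -/
theorem periodic_solution {d : ℕ}
    (A : EuclideanSpace ℝ (Fin d) →L[ℝ] EuclideanSpace ℝ (Fin d))
    (cS mS cb mb : ℝ) (hcS : 0 < cS) (hmS : 0 < mS) (hcb : 0 < cb) (hmb : 0 < mb)
    (hS : ∀ t : ℝ, 0 ≤ t → ‖NormedSpace.exp (t • A)‖ ≤ cS * Real.exp (-mS * t))
    (b : ℝ → EuclideanSpace ℝ (Fin d) → EuclideanSpace ℝ (Fin d))
    (hbcont : Continuous (Function.uncurry b))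
    (hlip : ∀ (t : ℝ) (x y : EuclideanSpace ℝ (Fin d)), ‖b t x - b t y‖ ≤ cb * ‖x - y‖)
    (hgrowth : ∀ (t : ℝ) (x : EuclideanSpace ℝ (Fin d)), ‖b t x‖ ≤ mb * (1 + ‖x‖))
    (τ : ℝ) (hτ : 0 < τ)
    (hper : ∀ (t : ℝ) (x : EuclideanSpace ℝ (Fin d)), b (t + τ) x = b t x)
    (hratio : cS * cb / mS < 1)
    (x : ℝ → EuclideanSpace ℝ (Fin d))
    (hxc : Continuous x) (hxb : ∃ C, ∀ t, ‖x t‖ ≤ C)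
    (hsol : ∀ t : ℝ, x t = ∫ s in Set.Iic t, (NormedSpace.exp ((t - s) • A)) (b s (x s))) :
    ∀ t : ℝ, x (t + τ) = x t :=
  periodic_solution_general A cS mS cb mb hmS hcb hmb hS b hbcont hlip hgrowth τ hper hratio x hxc
    hxb hsol
end
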